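/- Let P(λ) = Σ_{i=0}^{m} λⁱAᵢ with Aᵢ ∈ ℂ^{n×n}, Aᵢ ≠ 0 for all i, λ ∈ ℂ, and let x ∈ ℂⁿ be nonzero. Then the backward error of the approximate eigenpair (x, λ) measured relative to the coefficients, η(x, λ) := min{ε ≥ 0 : ∃ΔAᵢ, ‖ΔAᵢ‖₂ ≤ ε‖Aᵢ‖₂ for all i, (P(λ) + Σ λⁱΔAᵢ)x = 0}, satisfies η(x, λ) = ‖P(λ)x‖₂ / ((Σ_{i=0}^{m} |λ|ⁱ‖Aᵢ‖₂)·‖x‖₂). -/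

import Mathlib

open Matrix BigOperators

noncomputable def evnorm {n : Type*} [Fintype n] (v : n → ℂ) : ℝ :=
  Real.sqrt (∑ i, ‖v i‖ ^ 2)

noncomputable def frob {m n : Type*} [Fintype m] [Fintype n] (M : Matrix m n ℂ) : ℝ :=
  Real.sqrt (∑ i, ∑ j, ‖M i j‖ ^ 2)

noncomputable def sigmaMax {m n : Type*} [Fintype m] [Fintype n] (T : Matrix m n ℂ) : ℝ :=
  sSup {x | ∃ v, evnorm v = 1 ∧ x = evnorm (T.mulVec v)}

noncomputable def sigmaMin {m n : Type*} [Fintype m] [Fintype n] (T : Matrix m n ℂ) : ℝ :=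
  sInf {x | ∃ v, evnorm v = 1 ∧ x = evnorm (T.mulVec v)}

def hcat3 {i a b c : Type*} (A : Matrix i a ℂ) (B : Matrix i b ℂ) (C : Matrix i c ℂ) :
    Matrix i (a ⊕ b ⊕ c) ℂ :=
  Matrix.of fun x j => match j with
    | Sum.inl j => A x j
    | Sum.inr (Sum.inl j) => B x j
    | Sum.inr (Sum.inr j) => C x j

def vcat3 {a b c j : Type*} (A : Matrix a j ℂ) (B : Matrix b j ℂ) (C : Matrix c j ℂ) :
    Matrix (a ⊕ b ⊕ c) j ℂ :=
  Matrix.of fun i y => match i with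
    | Sum.inl i => A i y
    | Sum.inr (Sum.inl i) => B i y
    | Sum.inr (Sum.inr i) => C i y

noncomputable def Lnorm (m : ℕ) (μ : ℂ) : ℝ :=
  Real.sqrt (∑ i ∈ Finset.range (m + 1), ‖μ‖ ^ (2 * i))

open scoped Matrix.Norms.L2Operator

set_option linter.unusedSectionVars false

noncomputable def toE {ι : Type*} [Fintype ι] : (ι → ℂ) ≃ₗ[ℂ] EuclideanSpace ℂ ι :=
  (WithLp.linearEquiv 2 ℂ (ι → ℂ)).symm

lemma evnorm_eq {ι : Type*} [Fintype ι] (v : ι → ℂ) : evnorm v = ‖toE v‖ := by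
  rw [EuclideanSpace.norm_eq]; rfl

section
variable {κ ι : Type*} [Fintype κ] [Fintype ι] [DecidableEq ι] [Nonempty ι] (T : Matrix κ ι ℂ)

lemma evnorm_single : evnorm (Pi.single (Classical.arbitrary ι) (1:ℂ)) = 1 := by
  rw [evnorm_eq]
  have : (toE (Pi.single (Classical.arbitrary ι) (1:ℂ)) : EuclideanSpace ℂ ι)
      = EuclideanSpace.single (Classical.arbitrary ι) (1:ℂ) := rfl
  rw [this, EuclideanSpace.norm_single, norm_one]

lemma sigmaMax_set_nonempty :
    {x | ∃ v, evnorm v = 1 ∧ x = evnorm (T.mulVec v)}.Nonempty :=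
  ⟨_, Pi.single (Classical.arbitrary ι) 1, evnorm_single, rfl⟩

lemma mem_le_norm {x : ℝ} (hx : x ∈ {x | ∃ v, evnorm v = 1 ∧ x = evnorm (T.mulVec v)}) :
    x ≤ ‖T‖ := by
  obtain ⟨v, hv, rfl⟩ := hx
  have h := T.l2_opNorm_mulVec (toE v)
  have h2 : ‖(EuclideanSpace.equiv κ ℂ).symm (T *ᵥ (toE v))‖ = evnorm (T.mulVec v) := by
    rw [evnorm_eq]; rfl
  have h3 : ‖(toE v : EuclideanSpace ℂ ι)‖ = 1 := by rw [← evnorm_eq]; exact hv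
  rw [h2, h3, mul_one] at h
  exact h

lemma sigmaMax_bddAbove :
    BddAbove {x | ∃ v, evnorm v = 1 ∧ x = evnorm (T.mulVec v)} :=
  ⟨‖T‖, fun _ hx => mem_le_norm T hx⟩

lemma sigmaMax_eq : sigmaMax T = ‖T‖ := by
  refine le_antisymm (csSup_le (sigmaMax_set_nonempty T) (fun _ hx => mem_le_norm T hx)) ?_
  rw [Matrix.l2_opNorm_def]
  refine ContinuousLinearMap.opNorm_le_bound _ ?_ (fun v => ?_)
  · obtain ⟨y, hy⟩ := sigmaMax_set_nonempty T
    have : 0 ≤ y := by obtain ⟨v, _, rfl⟩ := hy; exact Real.sqrt_nonneg _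
    exact this.trans (le_csSup (sigmaMax_bddAbove T) hy)
  · rcases eq_or_ne v 0 with rfl | hv
    · simp
    · have hvn : ‖v‖ ≠ 0 := norm_ne_zero_iff.mpr hv
      set u : ι → ℂ := toE.symm ((‖v‖⁻¹ : ℂ) • v) with hu
      have hu1 : evnorm u = 1 := by
        rw [evnorm_eq, hu, LinearEquiv.apply_symm_apply, norm_smul]
        simp [hvn]
      have hmem : evnorm (T.mulVec u) ∈ {x | ∃ v, evnorm v = 1 ∧ x = evnorm (T.mulVec v)} :=
        ⟨u, hu1, rfl⟩
      have hle : evnorm (T.mulVec u) ≤ sigmaMax T := le_csSup (sigmaMax_bddAbove T) hmem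
      have key : ‖(Matrix.toEuclideanLin.trans LinearMap.toContinuousLinearMap T) v‖
          = ‖v‖ * evnorm (T.mulVec u) := by
        have : v = (‖v‖ : ℂ) • ((‖v‖⁻¹ : ℂ) • v) := by
          rw [smul_smul, mul_inv_cancel₀ (by exact_mod_cast hvn), one_smul]
        rw [evnorm_eq]
        conv_lhs => rw [this]
        rw [_root_.map_smul, norm_smul]
        have e2 : ((Matrix.toEuclideanLin.trans LinearMap.toContinuousLinearMap T)
            ((‖v‖⁻¹ : ℂ) • v) : EuclideanSpace ℂ κ) = toE (T.mulVec u) := by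
          rfl
        rw [e2]
        simp
      rw [key]
      calc ‖v‖ * evnorm (T.mulVec u) ≤ ‖v‖ * sigmaMax T := by
            exact mul_le_mul_of_nonneg_left hle (norm_nonneg v)
        _ = sigmaMax T * ‖v‖ := mul_comm _ _
end

section
variable {κ ι : Type*} [Fintype κ] [Fintype ι] [DecidableEq ι] [Nonempty ι]

lemma sigmaMax_nonneg (T : Matrix κ ι ℂ) : 0 ≤ sigmaMax T := by
  rw [sigmaMax_eq]; exact norm_nonneg _

lemma sigmaMax_pos {T : Matrix κ ι ℂ} (h : T ≠ 0) : 0 < sigmaMax T := by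
  rw [sigmaMax_eq]; exact norm_pos_iff.mpr h

lemma evnorm_mulVec_le (T : Matrix κ ι ℂ) (v : ι → ℂ) :
    evnorm (T.mulVec v) ≤ sigmaMax T * evnorm v := by
  rw [sigmaMax_eq, evnorm_eq, evnorm_eq]
  exact T.l2_opNorm_mulVec (toE v)

lemma sigmaMax_le_of_bound {T : Matrix κ ι ℂ} {C : ℝ}
    (h : ∀ v, evnorm v = 1 → evnorm (T.mulVec v) ≤ C) : sigmaMax T ≤ C :=
  csSup_le (sigmaMax_set_nonempty T) (by rintro y ⟨v, hv, rfl⟩; exact h v hv)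

end

lemma evnorm_nonneg {ι : Type*} [Fintype ι] (v : ι → ℂ) : 0 ≤ evnorm v :=
  Real.sqrt_nonneg _

lemma evnorm_pos {ι : Type*} [Fintype ι] {v : ι → ℂ} (h : v ≠ 0) : 0 < evnorm v := by
  rw [evnorm_eq]
  exact norm_pos_iff.mpr (by simpa using h)

lemma evnorm_smul {ι : Type*} [Fintype ι] (z : ℂ) (v : ι → ℂ) :
    evnorm (z • v) = ‖z‖ * evnorm v := by
  rw [evnorm_eq, evnorm_eq, _root_.map_smul, norm_smul]

lemma evnorm_neg {ι : Type*} [Fintype ι] (v : ι → ℂ) : evnorm (-v) = evnorm v := by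
  rw [evnorm_eq, evnorm_eq, map_neg, norm_neg]

lemma evnorm_sum_le {ι α : Type*} [Fintype ι] (s : Finset α) (f : α → ι → ℂ) :
    evnorm (∑ i ∈ s, f i) ≤ ∑ i ∈ s, evnorm (f i) := by
  rw [evnorm_eq, map_sum]
  exact (norm_sum_le _ _).trans (le_of_eq (by simp [evnorm_eq]))

lemma abs_dot_le {ι : Type*} [Fintype ι] (x v : ι → ℂ) :
    ‖dotProduct (star x) v‖ ≤ evnorm x * evnorm v := by
  have h := @norm_inner_le_norm ℂ (EuclideanSpace ℂ ι) _ _ _ (toE x) (toE v)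
  rw [evnorm_eq, evnorm_eq]
  exact le_of_eq (by rw [dotProduct_comm]; rfl) |>.trans h

lemma sq_evnorm {ι : Type*} [Fintype ι] (x : ι → ℂ) :
    (dotProduct (star x) x) = ((evnorm x : ℝ) ^ 2 : ℝ) := by
  have : dotProduct (star x) x = ∑ i, (starRingEnd ℂ (x i)) * x i := rfl
  rw [this]
  rw [evnorm]
  rw [Real.sq_sqrt (Finset.sum_nonneg fun i _ => sq_nonneg _)]
  push_cast
  congr 1
  ext i
  rw [mul_comm, Complex.mul_conj']

lemma sum_mulVec' {ι κ α : Type*} [Fintype ι] [Fintype κ] (s : Finset α)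
    (M : α → Matrix κ ι ℂ) (v : ι → ℂ) :
    (∑ i ∈ s, M i).mulVec v = ∑ i ∈ s, (M i).mulVec v := by
  ext j
  simp only [Matrix.mulVec, dotProduct, Finset.sum_apply, Finset.sum_mul,
    Matrix.sum_apply]
  rw [Finset.sum_comm]

lemma vecMulVec_mulVec' {ι κ : Type*} [Fintype ι] [Fintype κ] (u : κ → ℂ) (w v : ι → ℂ) :
    (Matrix.vecMulVec u w).mulVec v = (dotProduct w v) • u := by
  ext i
  simp only [Matrix.mulVec, dotProduct, Matrix.vecMulVec_apply, Pi.smul_apply,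
    smul_eq_mul, Finset.sum_mul]
  exact Finset.sum_congr rfl fun j _ => by ring

theorem stmt18 {n m : ℕ} (μ : ℂ)
    (Amat : Fin (m + 1) → Matrix (Fin n) (Fin n) ℂ)
    (hA : ∀ i, Amat i ≠ 0)
    (x : Fin n → ℂ) (hx : x ≠ 0)
    (P : Matrix (Fin n) (Fin n) ℂ) (hP : P = ∑ i : Fin (m + 1), μ ^ (i : ℕ) • Amat i) :
    sInf {ε : ℝ | 0 ≤ ε ∧ ∃ ΔA : Fin (m + 1) → Matrix (Fin n) (Fin n) ℂ,
        (∀ i, sigmaMax (ΔA i) ≤ ε * sigmaMax (Amat i)) ∧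
        (P + ∑ i : Fin (m + 1), μ ^ (i : ℕ) • ΔA i).mulVec x = 0} =
      evnorm (P.mulVec x) / ((∑ i : Fin (m + 1), ‖μ‖ ^ (i : ℕ) * sigmaMax (Amat i)) * evnorm x) := by
  have hn : Nonempty (Fin n) := by
    rcases Nat.eq_zero_or_pos n with h | h
    · subst h; exact absurd (funext fun i => i.elim0) hx
    · exact ⟨⟨0, h⟩⟩
  have hσ : ∀ i, 0 < sigmaMax (Amat i) := fun i => sigmaMax_pos (hA i)
  set c : ℝ := ∑ i : Fin (m + 1), ‖μ‖ ^ (i : ℕ) * sigmaMax (Amat i) with hc_def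
  have hc : 0 < c := by
    refine Finset.sum_pos' (fun i _ => mul_nonneg (pow_nonneg (norm_nonneg μ) _) (hσ i).le) ?_
    exact ⟨0, Finset.mem_univ _, by simpa using (hσ 0)⟩
  have hX : 0 < evnorm x := evnorm_pos hx
  set N := evnorm (P.mulVec x) with hN_def
  set r := N / (c * evnorm x) with hr_def
  have hr0 : 0 ≤ r := div_nonneg (evnorm_nonneg _) (by positivity)
  have hrS : r ∈ {ε : ℝ | 0 ≤ ε ∧ ∃ ΔA : Fin (m + 1) → Matrix (Fin n) (Fin n) ℂ,
      (∀ i, sigmaMax (ΔA i) ≤ ε * sigmaMax (Amat i)) ∧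
      (P + ∑ i : Fin (m + 1), μ ^ (i : ℕ) • ΔA i).mulVec x = 0} := by
    refine ⟨hr0, ?_⟩
    set R : Matrix (Fin n) (Fin n) ℂ :=
      (((evnorm x : ℂ)) ^ 2)⁻¹ • Matrix.vecMulVec (P.mulVec x) (star x) with hR_def
    set ψ : Fin (m + 1) → ℂ := fun i =>
      if μ = 0 then 1 else (starRingEnd ℂ μ) ^ (i : ℕ) / ((‖μ‖ : ℂ)) ^ (i : ℕ) with hψ_def
    have hψnorm : ∀ i, ‖ψ i‖ ≤ 1 := by
      intro i; rw [hψ_def]; dsimp only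
      split_ifs with hμ
      · simp
      · have hμn : ‖μ‖ ≠ 0 := norm_ne_zero_iff.mpr hμ
        rw [norm_div, norm_pow, norm_pow, RCLike.norm_conj, Complex.norm_real,
          Real.norm_of_nonneg (norm_nonneg μ), div_self (pow_ne_zero _ hμn)]
    have hψkey : ∀ i : Fin (m + 1), μ ^ (i : ℕ) * ψ i = ((‖μ‖ ^ (i : ℕ) : ℝ) : ℂ) := by
      intro i; rw [hψ_def]; dsimp only
      split_ifs with hμ
      · subst hμ
        rcases Nat.eq_zero_or_pos (i : ℕ) with h | h
        · simp [h]
        · rw [zero_pow (Nat.pos_iff_ne_zero.mp h), norm_zero,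
            zero_pow (Nat.pos_iff_ne_zero.mp h)]
          simp
      · have hμn : (‖μ‖ : ℂ) ≠ 0 := Complex.ofReal_ne_zero.mpr (norm_ne_zero_iff.mpr hμ)
        rw [mul_div_assoc', div_eq_iff (pow_ne_zero _ hμn), ← mul_pow, Complex.mul_conj',
          ← pow_mul, Complex.ofReal_pow, ← pow_add, two_mul]
    have hXC : ((evnorm x : ℂ)) ^ 2 ≠ 0 :=
      pow_ne_zero _ (Complex.ofReal_ne_zero.mpr hX.ne')
    have hRx : R.mulVec x = P.mulVec x := by
      rw [hR_def, Matrix.smul_mulVec, vecMulVec_mulVec', sq_evnorm, smul_smul,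
        ← Complex.ofReal_pow, inv_mul_cancel₀ (by rwa [Complex.ofReal_pow]), one_smul]
    refine ⟨fun i => (-(((sigmaMax (Amat i) / c : ℝ)) : ℂ) * ψ i) • R, ?_, ?_⟩
    · intro i
      refine sigmaMax_le_of_bound fun v hv => ?_
      have hmv : ((-(((sigmaMax (Amat i) / c : ℝ)) : ℂ) * ψ i) • R).mulVec v =
          ((-(((sigmaMax (Amat i) / c : ℝ)) : ℂ) * ψ i) * (((evnorm x : ℂ)) ^ 2)⁻¹ *
            (dotProduct (star x) v)) • P.mulVec x := by
        rw [Matrix.smul_mulVec, hR_def, Matrix.smul_mulVec, vecMulVec_mulVec',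
          smul_smul, smul_smul]
      rw [hmv, evnorm_smul]
      have hb : ‖(-(((sigmaMax (Amat i) / c : ℝ)) : ℂ) * ψ i) * (((evnorm x : ℂ)) ^ 2)⁻¹ *
            (dotProduct (star x) v)‖ ≤
          (sigmaMax (Amat i) / c) * ((evnorm x) ^ 2)⁻¹ * evnorm x := by
        rw [norm_mul, norm_mul, norm_mul, norm_neg, norm_inv]
        have h1 : ‖(((sigmaMax (Amat i) / c : ℝ)) : ℂ)‖ = sigmaMax (Amat i) / c := by
          rw [Complex.norm_real, Real.norm_of_nonneg (div_nonneg (hσ i).le hc.le)]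
        have h2 : ‖(((evnorm x : ℂ)) ^ 2)‖ = (evnorm x) ^ 2 := by
          rw [norm_pow, Complex.norm_real, Real.norm_of_nonneg (evnorm_nonneg x)]
        have h3 : ‖dotProduct (star x) v‖ ≤ evnorm x := by
          have := abs_dot_le x v
          rwa [hv, mul_one] at this
        rw [h1, h2]
        have h5 : ‖ψ i‖ * ‖dotProduct (star x) v‖ ≤ evnorm x := by
          calc ‖ψ i‖ * ‖dotProduct (star x) v‖ ≤ 1 * evnorm x :=
                mul_le_mul (hψnorm i) h3 (norm_nonneg _) zero_le_one
            _ = evnorm x := one_mul _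
        calc sigmaMax (Amat i) / c * ‖ψ i‖ * ((evnorm x) ^ 2)⁻¹ * ‖dotProduct (star x) v‖
            = sigmaMax (Amat i) / c * ((evnorm x) ^ 2)⁻¹ *
              (‖ψ i‖ * ‖dotProduct (star x) v‖) := by ring
          _ ≤ sigmaMax (Amat i) / c * ((evnorm x) ^ 2)⁻¹ * evnorm x :=
              mul_le_mul_of_nonneg_left h5
                (mul_nonneg (div_nonneg (hσ i).le hc.le) (inv_nonneg.mpr (sq_nonneg _)))
      calc ‖_‖ * N ≤ (sigmaMax (Amat i) / c) * ((evnorm x) ^ 2)⁻¹ * evnorm x * N :=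
            mul_le_mul_of_nonneg_right hb (evnorm_nonneg _)
        _ = r * sigmaMax (Amat i) := by
            rw [hr_def]; field_simp
    · have hsum : (∑ i : Fin (m + 1), μ ^ (i : ℕ) •
          ((-(((sigmaMax (Amat i) / c : ℝ)) : ℂ) * ψ i) • R)) = (-1 : ℂ) • R := by
        have hterm : ∀ i : Fin (m + 1), μ ^ (i : ℕ) •
            ((-(((sigmaMax (Amat i) / c : ℝ)) : ℂ) * ψ i) • R) =
            ((-(sigmaMax (Amat i) / c * ‖μ‖ ^ (i : ℕ)) : ℝ) : ℂ) • R := by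
          intro i
          rw [smul_smul]
          congr 1
          have : μ ^ (i : ℕ) * (-(((sigmaMax (Amat i) / c : ℝ)) : ℂ) * ψ i) =
              -(((sigmaMax (Amat i) / c : ℝ)) : ℂ) * (μ ^ (i : ℕ) * ψ i) := by ring
          rw [this, hψkey i]
          push_cast
          ring
        rw [Finset.sum_congr rfl fun i _ => hterm i, ← Finset.sum_smul]
        congr 1
        rw [← Complex.ofReal_sum]
        have : ∑ i : Fin (m + 1), -(sigmaMax (Amat i) / c * ‖μ‖ ^ (i : ℕ)) = -1 := by
          have h4 : ∑ i : Fin (m + 1), -(sigmaMax (Amat i) / c * ‖μ‖ ^ (i : ℕ)) =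
              -((∑ i : Fin (m + 1), ‖μ‖ ^ (i : ℕ) * sigmaMax (Amat i)) / c) := by
            rw [← neg_div, ← Finset.sum_neg_distrib, Finset.sum_div]
            exact Finset.sum_congr rfl fun i _ => by ring
          rw [h4, ← hc_def, div_self hc.ne']
        rw [this]
        norm_num
      rw [hsum, Matrix.add_mulVec, Matrix.smul_mulVec, hRx, neg_one_smul]
      simp
  refine le_antisymm (csInf_le ⟨0, fun ε hε => hε.1⟩ hrS) (le_csInf ⟨r, hrS⟩ ?_)
  rintro ε ⟨hε0, ΔA, hΔ, hcon⟩
  -- show r ≤ ε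
  have key : N ≤ ε * (c * evnorm x) := by
    have h1 : P.mulVec x = -((∑ i : Fin (m + 1), μ ^ (i : ℕ) • ΔA i).mulVec x) := by
      rw [eq_neg_iff_add_eq_zero, ← Matrix.add_mulVec]
      exact hcon
    have h2 : N = evnorm ((∑ i : Fin (m + 1), μ ^ (i : ℕ) • ΔA i).mulVec x) := by
      rw [hN_def, h1, evnorm_neg]
    rw [h2, sum_mulVec']
    calc evnorm (∑ i : Fin (m + 1), (μ ^ (i : ℕ) • ΔA i).mulVec x)
        ≤ ∑ i : Fin (m + 1), evnorm ((μ ^ (i : ℕ) • ΔA i).mulVec x) := evnorm_sum_le _ _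
      _ ≤ ∑ i : Fin (m + 1), ‖μ‖ ^ (i : ℕ) * (ε * sigmaMax (Amat i) * evnorm x) := by
          refine Finset.sum_le_sum fun i _ => ?_
          rw [Matrix.smul_mulVec, evnorm_smul, norm_pow]
          refine mul_le_mul_of_nonneg_left ?_ (by positivity)
          calc evnorm ((ΔA i).mulVec x) ≤ sigmaMax (ΔA i) * evnorm x :=
                evnorm_mulVec_le _ _
            _ ≤ ε * sigmaMax (Amat i) * evnorm x :=
                mul_le_mul_of_nonneg_right (hΔ i) hX.le
      _ = ε * (c * evnorm x) := by
          rw [hc_def, Finset.sum_mul, Finset.mul_sum]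
          exact Finset.sum_congr rfl fun i _ => by ring
  rw [hr_def, div_le_iff₀ (by positivity)]
  exact key
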